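/- Let g(x) = ⟨x, Qx⟩/2 - ⟨b, x⟩ with Q a symmetric positive-definite M-matrix, S ⊆ [n], and x⁰ ≥ 0 with x⁰ᵢ = 0 for i ∉ S and ∇ᵢg(x⁰) ≤ 0 for i ∈ S. Let C = span{eᵢ : i ∈ S} ∩ ℝⁿ_{≥0} and x^{*,C} = argmin_{x ∈ C} g(x). If for some i ∈ S either x⁰ᵢ > 0 or ∇ᵢg(x⁰) < 0, then x^{*,C}ᵢ > 0. -/

import Mathlib

open Matrix

/-- The quadratic objective `g x = ⟨x, Qx⟩/2 - ⟨b, x⟩`. -/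
noncomputable def quadObj {n : ℕ} (Q : Matrix (Fin n) (Fin n) ℝ) (b x : Fin n → ℝ) : ℝ :=
  (1/2) * (x ⬝ᵥ Q.mulVec x) - b ⬝ᵥ x

lemma quad_expand {n : ℕ} (Q : Matrix (Fin n) (Fin n) ℝ) (hQ : Q.IsSymm) (b x d : Fin n → ℝ) :
    quadObj Q b (x + d) =
      quadObj Q b x + ((Q.mulVec x - b) ⬝ᵥ d + (1/2) * (d ⬝ᵥ Q.mulVec d)) := by
  have hsym : d ⬝ᵥ Q.mulVec x = x ⬝ᵥ Q.mulVec d := by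
    rw [dotProduct_mulVec, ← Matrix.mulVec_transpose, hQ.eq, dotProduct_comm]
  simp only [quadObj, mulVec_add, dotProduct_add, add_dotProduct, sub_dotProduct]
  rw [dotProduct_comm (Q.mulVec x) d]
  linear_combination (-1/2 : ℝ) * hsym

/-- Proposition 3, item 2: under the hypotheses of item 1, if for some
`i ∈ S` either `x⁰ᵢ > 0` or `∇ᵢg(x⁰) < 0`, then the minimizer over
`C = span{eᵢ : i ∈ S} ∩ ℝⁿ₊` has `x^{*,C}ᵢ > 0`. -/
theorem stmt_8 (n : ℕ) (Q : Matrix (Fin n) (Fin n) ℝ) (b : Fin n → ℝ)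
    (hQsymm : Q.IsSymm) (hQpd : Q.PosDef)
    (hM : ∀ i j : Fin n, i ≠ j → Q i j ≤ 0)
    (S : Set (Fin n)) (x0 : Fin n → ℝ)
    (hx0nonneg : ∀ i, 0 ≤ x0 i)
    (hx0supp : ∀ i ∉ S, x0 i = 0)
    (hx0grad : ∀ i ∈ S, (Q.mulVec x0 - b) i ≤ 0)
    (xC : Fin n → ℝ)
    (hxCmem : (∀ i, 0 ≤ xC i) ∧ ∀ i ∉ S, xC i = 0)
    (hxCmin : ∀ z : Fin n → ℝ, ((∀ i, 0 ≤ z i) ∧ ∀ i ∉ S, z i = 0) →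
      quadObj Q b xC ≤ quadObj Q b z)
    (i : Fin n) (hiS : i ∈ S)
    (hi : 0 < x0 i ∨ (Q.mulVec x0 - b) i < 0) :
    0 < xC i := by
  classical
  obtain ⟨hxCnn, hxCsupp⟩ := hxCmem
  -- KKT: for j ∈ S, the gradient at xC is nonnegative
  have hKKT : ∀ j ∈ S, 0 ≤ (Q.mulVec xC - b) j := by
    intro j hj
    by_contra hneg
    push_neg at hneg
    have hQjj : 0 < Q j j := by
      have h1 := hQpd.dotProduct_mulVec_pos (x := Pi.single j 1) (by
        intro h
        have := congrFun h j
        simp at this)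
      simpa [mulVec, dotProduct, Pi.single_apply] using h1
    set t : ℝ := -((Q.mulVec xC - b) j) / Q j j with ht
    have htpos : 0 < t := div_pos (neg_pos.2 hneg) hQjj
    have hfeas : (∀ k, 0 ≤ (xC + Pi.single j t : Fin n → ℝ) k) ∧
        ∀ k ∉ S, (xC + Pi.single j t : Fin n → ℝ) k = 0 := by
      constructor
      · intro k
        have : (0:ℝ) ≤ (Pi.single j t : Fin n → ℝ) k := by
          rcases eq_or_ne k j with rfl | hkj
          · simp [htpos.le]
          · simp [Pi.single_apply, hkj]
        exact add_nonneg (hxCnn k) this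
      · intro k hk
        have hkj : k ≠ j := by rintro rfl; exact hk hj
        simp [Pi.single_apply, hkj, hxCsupp k hk]
    have hmin := hxCmin _ hfeas
    rw [quad_expand Q hQsymm b xC (Pi.single j t)] at hmin
    have h1 : (Q.mulVec xC - b) ⬝ᵥ Pi.single j t = (Q.mulVec xC - b) j * t := by
      simp [dotProduct, Pi.single_apply]
    have h2 : (Pi.single j t : Fin n → ℝ) ⬝ᵥ Q.mulVec (Pi.single j t) = t * (Q j j * t) := by
      simp [mulVec, dotProduct, Pi.single_apply]
    have htQ : t * Q j j = -((Q.mulVec xC - b) j) := by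
      rw [ht]; field_simp
    rw [h1, h2] at hmin
    nlinarith [mul_pos htpos htpos, mul_pos htpos hQjj]
  -- the positive part of x0 - xC
  set u : Fin n → ℝ := fun j => max (x0 j - xC j) 0 with hu
  set v : Fin n → ℝ := fun j => max (xC j - x0 j) 0 with hv
  have hunn : ∀ j, 0 ≤ u j := fun j => le_max_right _ _
  have hvnn : ∀ j, 0 ≤ v j := fun j => le_max_right _ _
  have huvz : ∀ j, 0 < u j → v j = 0 := by
    intro j hj
    have : xC j < x0 j := by
      by_contra h
      push_neg at h
      simp only [hu] at hj
      have : u j = 0 := max_eq_right (by linarith)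
      linarith [hj, this.le]
    simp only [hv]
    exact max_eq_right (by linarith)
  have hx0eq : x0 = xC + (u - v) := by
    funext j
    simp only [Pi.add_apply, Pi.sub_apply, hu, hv]
    rcases le_total (x0 j) (xC j) with h | h
    · rw [max_eq_right (by linarith), max_eq_left (by linarith)]; ring
    · rw [max_eq_left (by linarith), max_eq_right (by linarith)]; ring
  -- feasibility of xC + u
  have hfeasz : (∀ k, 0 ≤ (xC + u) k) ∧ ∀ k ∉ S, (xC + u) k = 0 := by
    constructor
    · intro k; exact add_nonneg (hxCnn k) (hunn k)
    · intro k hk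
      simp only [Pi.add_apply, hu, hxCsupp k hk, hx0supp k hk]
      simp
  have hmin := hxCmin _ hfeasz
  rw [quad_expand Q hQsymm b xC u] at hmin
  have hE : 0 ≤ (Q.mulVec xC - b) ⬝ᵥ u + (1/2) * (u ⬝ᵥ Q.mulVec u) := by linarith
  -- gradient at x0 dotted with u is ≤ 0
  have h0 : (Q.mulVec x0 - b) ⬝ᵥ u ≤ 0 := by
    apply Finset.sum_nonpos
    intro j _
    by_cases hjS : j ∈ S
    · exact mul_nonpos_of_nonpos_of_nonneg (hx0grad j hjS) (hunn j)
    · have : u j = 0 := by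
        simp only [hu, hx0supp j hjS, hxCsupp j hjS]
        simp
      simp [this]
  -- Q v dotted with u is ≤ 0
  have hCv : Q.mulVec v ⬝ᵥ u ≤ 0 := by
    apply Finset.sum_nonpos
    intro j _
    rcases (hunn j).lt_or_eq with hj | hj
    · have hvj : v j = 0 := huvz j hj
      have : Q.mulVec v j ≤ 0 := by
        simp only [mulVec, dotProduct]
        apply Finset.sum_nonpos
        intro k _
        rcases eq_or_ne k j with rfl | hkj
        · simp [hvj]
        · exact mul_nonpos_of_nonpos_of_nonneg (hM j k (Ne.symm hkj)) (hvnn k)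
      exact mul_nonpos_of_nonpos_of_nonneg this (hunn j)
    · simp [← hj]
  have hdecomp : (Q.mulVec x0 - b) ⬝ᵥ u
      = (Q.mulVec xC - b) ⬝ᵥ u + (Q.mulVec u ⬝ᵥ u - Q.mulVec v ⬝ᵥ u) := by
    rw [hx0eq]
    simp only [mulVec_add, mulVec_sub, sub_dotProduct, add_dotProduct]
    ring
  have hcomm : Q.mulVec u ⬝ᵥ u = u ⬝ᵥ Q.mulVec u := dotProduct_comm _ _
  have huQu : u ⬝ᵥ Q.mulVec u ≤ 0 := by
    rw [hdecomp, hcomm] at h0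
    linarith
  have hu0 : u = 0 := by
    by_contra h
    exact absurd (by simpa using hQpd.dotProduct_mulVec_pos h) (not_lt.2 huQu)
  have hx0le : ∀ j, x0 j ≤ xC j := by
    intro j
    have h1 := congrFun hu0 j
    simp only [hu, Pi.zero_apply] at h1
    have h2 : x0 j - xC j ≤ max (x0 j - xC j) 0 := le_max_left _ _
    rw [h1] at h2
    linarith
  rcases hi with hpos | hgrad
  · exact lt_of_lt_of_le hpos (hx0le i)
  · by_contra h
    push_neg at h
    have hxCi : xC i = 0 := le_antisymm h (hxCnn i)
    have hx0i : x0 i = 0 := le_antisymm (by rw [← hxCi]; exact hx0le i) (hx0nonneg i)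
    have hKi := hKKT i hiS
    have hdiff : (Q.mulVec xC - b) i - (Q.mulVec x0 - b) i ≤ 0 := by
      have : (Q.mulVec xC - b) i - (Q.mulVec x0 - b) i = ∑ k, Q i k * (xC k - x0 k) := by
        simp [mulVec, dotProduct, Finset.mul_sum, mul_sub, Finset.sum_sub_distrib]
      rw [this]
      apply Finset.sum_nonpos
      intro k _
      rcases eq_or_ne k i with rfl | hki
      · simp [hxCi, hx0i]
      · exact mul_nonpos_of_nonpos_of_nonneg (hM i k (Ne.symm hki))
          (by linarith [hx0le k])
    linarith
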